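/- Let φ be the morphism φ(A) = A^p B, φ(B) = A^q with p ≥ q > 1, let u_β be its fixed point, and define w = lim w^(N) and v = lim v^(N), where w^(0) = B, A^p w^(n) = φ^2(w^(n-1)), and v^(n) = φ(w^(n)). Then for every factor u of u_β, if ŵ and v̂ denote the prefixes of w and v respectively of length |u|, one has |ŵ|_B ≥ |u|_B ≥ |v̂|_B. In other words, among all factors of u_β of a given length, the prefix of w maximizes and the prefix of v minimizes the number of occurrences of B. -/

import Mathlib

/-- Number of occurrences of the letter `A` (encoded as `false`). -/
def countA (w : List Bool) : ℕ := w.count false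

/-- Number of occurrences of the letter `B` (encoded as `true`). -/
def countB (w : List Bool) : ℕ := w.count true

/-- Extension of a morphism (given on letters) to finite words. -/
def applyM (φ : Bool → List Bool) (w : List Bool) : List Bool := (w.map φ).flatten

/-- `w` is a factor of the infinite word `u`. -/
def IsFactor (u : ℕ → Bool) (w : List Bool) : Prop :=
  ∃ i, w = (List.range w.length).map (fun j => u (i + j))

/-- The prefix of length `n` of the infinite word `u`. -/
def prefWord (u : ℕ → Bool) (n : ℕ) : List Bool := (List.range n).map u

/-- The finite word `w` is a prefix of the infinite word `u`. -/
def IsPrefixOf (w : List Bool) (u : ℕ → Bool) : Prop := w = prefWord u w.length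

/-- Abelian complexity: number of Parikh vectors of factors of length `n`. -/
noncomputable def AC (u : ℕ → Bool) (n : ℕ) : ℕ :=
  Set.ncard {P : ℕ × ℕ | ∃ w, IsFactor u w ∧ w.length = n ∧ P = (countA w, countB w)}

/-- `n`-fold iterate of the morphism `φ` applied to the letter `a`. -/
def iterW (φ : Bool → List Bool) (n : ℕ) (a : Bool) : List Bool := (applyM φ)^[n] [a]

/-- The morphism `A ↦ AᵖB, B ↦ A^q` (simple Parry case). -/
def simpleM (p q : ℕ) : Bool → List Bool
  | false => List.replicate p false ++ [true]
  | true  => List.replicate q false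

/-- The morphism `A ↦ AᵖB, B ↦ A^qB` (non-simple Parry case). -/
def nonsimpleM (p q : ℕ) : Bool → List Bool
  | false => List.replicate p false ++ [true]
  | true  => List.replicate q false ++ [true]

/-- Greedy digits `(d_N, …, d_0)` of `x` in the base given by `U`
    (assuming `U 0 = 1`): `d_j = ⌊x_j / U_j⌋`, `x_{j-1} = x_j mod U_j`. -/
def gdigits (U : ℕ → ℕ) : ℕ → ℕ → List ℕ
  | 0, x => [x]
  | j+1, x => x / U (j+1) :: gdigits U j (x % U (j+1))

/-- The digit `d_j` of the normal `U`-representation `(d_N, …, d_0)` of `n`. -/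
def dig (U : ℕ → ℕ) (N n j : ℕ) : ℕ := (gdigits U N n).getD (N - j) 0

/-- The words `w⁽ⁿ⁾` of the non-simple Parry case: `w⁽⁰⁾ = B`, `w⁽ⁿ⁾ = B·φ(w⁽ⁿ⁻¹⁾)`. -/
def wNon (φ : Bool → List Bool) : ℕ → List Bool
  | 0 => [true]
  | n+1 => true :: applyM φ (wNon φ n)

/-- The words `w⁽ᴺ⁾ = B·φ(A^{q-1})·φ³(A^{q-1})⋯φ^{2N-1}(A^{q-1})` of the simple Parry case. -/
def wSim (φ : Bool → List Bool) (q : ℕ) (N : ℕ) : List Bool :=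
  true :: ((List.range N).map
    (fun k => (applyM φ)^[2*k+1] (List.replicate (q-1) false))).flatten
/-!
The three infinite words are linked by `φ`: `u_β = φ(u_β)`, `v = φ(w)` and `φ(v) = Aᵖ w`.
In an image `φ(y)` only complete blocks `φ(A) = AᵖB` carry a `B`, so a prefix of `φ(y)` of
length `m` has as many `B`s as the longest prefix of `y` with image of length `≤ m` has `A`s.

Induction on the length `n`: a factor `x` of `u_β` with `n ≥ 2` is the image of a shorter factor
`y`, with `a` letters `A` and `b` letters `B`, up to less than one block at each end. Then
`|x|_B = a` and `(p+1)a + qb` is within `p` of `n`. The induction hypothesis compares `y` with the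
prefixes of `w` and `v` of length `a + b`, and `v = φ(w)`, `φ(v) = Aᵖ w` carry the comparison
over to the prefixes of length `n`.
-/

open List

section Words

variable (φ : Bool → List Bool)

@[simp] lemma applyM_nil : applyM φ [] = [] := rfl

@[simp] lemma applyM_cons (a : Bool) (y : List Bool) :
    applyM φ (a :: y) = φ a ++ applyM φ y := by
  simp [applyM]

@[simp] lemma applyM_append (x y : List Bool) :
    applyM φ (x ++ y) = applyM φ x ++ applyM φ y := by
  simp [applyM]

@[simp] lemma applyM_singleton (a : Bool) : applyM φ [a] = φ a := by
  simp [applyM]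

lemma applyM_prefix {x y : List Bool} (h : x <+: y) : applyM φ x <+: applyM φ y := by
  obtain ⟨z, rfl⟩ := h
  simp

lemma iterW_succ (n : ℕ) (a : Bool) : iterW φ (n + 1) a = applyM φ (iterW φ n a) :=
  Function.iterate_succ_apply' _ _ _

end Words

section InfiniteWords

variable {u w : ℕ → Bool} {x y : List Bool}

lemma isPrefixOf_iff_getElem :
    IsPrefixOf x u ↔ ∀ (j : ℕ) (hj : j < x.length), x[j] = u j := by
  simp [IsPrefixOf, prefWord, List.ext_getElem_iff]

lemma IsPrefixOf.of_prefix (hx : IsPrefixOf x u) (hyx : y <+: x) : IsPrefixOf y u := by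
  rw [isPrefixOf_iff_getElem] at hx ⊢
  intro j hj
  rw [hyx.getElem hj, hx]

lemma isPrefixOf_prefWord (u : ℕ → Bool) (n : ℕ) : IsPrefixOf (prefWord u n) u := by
  simp [IsPrefixOf, prefWord]

lemma prefWord_add (u : ℕ → Bool) (a b : ℕ) :
    prefWord u (a + b) = prefWord u a ++ (range b).map (fun j => u (a + j)) := by
  simp [prefWord, List.range_add]

@[simp] lemma prefWord_length (u : ℕ → Bool) (n : ℕ) : (prefWord u n).length = n := by
  simp [prefWord]

lemma prefWord_succ (u : ℕ → Bool) (n : ℕ) : prefWord u (n + 1) = prefWord u n ++ [u n] := by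
  simp [prefWord_add]

lemma prefWord_prefix (u : ℕ → Bool) {m n : ℕ} (h : m ≤ n) :
    prefWord u m <+: prefWord u n := by
  obtain ⟨k, rfl⟩ := Nat.exists_eq_add_of_le h
  rw [prefWord_add]
  exact prefix_append _ _

lemma IsPrefixOf.prefWord_eq_take (hx : IsPrefixOf x u) {m : ℕ} (hm : m ≤ x.length) :
    prefWord u m = x.take m := by
  rw [hx]
  simp [prefWord, ← map_take, take_range, min_eq_left hm]

/-- The infinite word `Aᵖ w`. -/
def prependA (p : ℕ) (w : ℕ → Bool) : ℕ → Bool :=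
  fun j => if j < p then false else w (j - p)

lemma IsPrefixOf.replicate_append (hx : IsPrefixOf x w) (p : ℕ) :
    IsPrefixOf (replicate p false ++ x) (prependA p w) := by
  rw [isPrefixOf_iff_getElem] at hx ⊢
  intro j hj
  by_cases hjp : j < p
  · simp [prependA, hjp]
  · simp [prependA, hjp, getElem_append, hx]

/-- `u' = φ(u)` as infinite words. -/
def IsImage (φ : Bool → List Bool) (u u' : ℕ → Bool) : Prop :=
  ∀ k, IsPrefixOf (applyM φ (prefWord u k)) u'

lemma isImage_of_prefixes {φ : Bool → List Bool} {u' : ℕ → Bool} (X : ℕ → List Bool)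
    (hX : ∀ N, IsPrefixOf (X N) u) (hφX : ∀ N, IsPrefixOf (applyM φ (X N)) u')
    (hlen : ∀ N, N ≤ (X N).length) : IsImage φ u u' := by
  intro k
  have hk : prefWord u k <+: X k := by
    rw [hX k]
    exact prefWord_prefix u (hlen k)
  exact (hφX k).of_prefix (applyM_prefix φ hk)

lemma countB_append (x y : List Bool) : countB (x ++ y) = countB x + countB y :=
  count_append

def prefCountA (u : ℕ → Bool) (k : ℕ) : ℕ := countA (prefWord u k)

def prefCountB (u : ℕ → Bool) (k : ℕ) : ℕ := countB (prefWord u k)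

lemma prefCountA_add_prefCountB (u : ℕ → Bool) (k : ℕ) :
    prefCountA u k + prefCountB u k = k := by
  simp [prefCountA, prefCountB, countA, countB, List.count_false_add_count_true, prefWord]

lemma prefCountA_mono (u : ℕ → Bool) : Monotone (prefCountA u) :=
  fun _ _ h => (prefWord_prefix u h).sublist.count_le _

lemma prefCountB_mono (u : ℕ → Bool) : Monotone (prefCountB u) :=
  fun _ _ h => (prefWord_prefix u h).sublist.count_le _

lemma prefCountB_add_le (u : ℕ → Bool) (i n : ℕ) :
    prefCountB u (i + n) ≤ prefCountB u i + n := by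
  have := prefCountA_mono u (Nat.le_add_right i n)
  have := prefCountA_add_prefCountB u i
  have := prefCountA_add_prefCountB u (i + n)
  omega

lemma prefCountB_prependA (p : ℕ) (w : ℕ → Bool) (n : ℕ) :
    prefCountB (prependA p w) (p + n) = prefCountB w n := by
  have h := (isPrefixOf_prefWord w n).replicate_append p
  simp only [IsPrefixOf, length_append, length_replicate, prefWord_length] at h
  rw [prefCountB, ← h, prefCountB, countB, count_append]
  simp [countB, count_replicate]

end InfiniteWords

section Morphism

variable {p q : ℕ}

lemma countB_applyM_simpleM (y : List Bool) : countB (applyM (simpleM p q) y) = countA y := by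
  induction y with
  | nil => rfl
  | cons a y ih =>
    cases a <;> simp_all [simpleM, countA, countB, count_replicate]

lemma length_applyM_simpleM (y : List Bool) :
    (applyM (simpleM p q) y).length = (p + 1) * countA y + q * countB y := by
  induction y with
  | nil => rfl
  | cons a y ih =>
    cases a <;> simp [simpleM, countA, countB, ih] <;> ring

lemma two_mul_length_le_length_applyM (hp : 1 ≤ p) (hq : 2 ≤ q) (y : List Bool) :
    2 * y.length ≤ (applyM (simpleM p q) y).length := by
  rw [length_applyM_simpleM, ← count_false_add_count_true]
  unfold countA countB
  nlinarith

lemma length_le_length_applyM (hq : 1 ≤ q) (y : List Bool) :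
    y.length ≤ (applyM (simpleM p q) y).length := by
  rw [length_applyM_simpleM, ← count_false_add_count_true]
  unfold countA countB
  nlinarith

lemma length_le_length_iterate_applyM (hq : 1 ≤ q) (j : ℕ) (y : List Bool) :
    y.length ≤ ((applyM (simpleM p q))^[j] y).length := by
  induction j generalizing y with
  | zero => rfl
  | succ j ih => exact (length_le_length_applyM hq y).trans (ih _)

lemma countB_take_simpleM {c : Bool} {m : ℕ} (h : m < (simpleM p q c).length) :
    countB ((simpleM p q c).take m) = 0 := by
  cases c
  · simp only [simpleM, length_append, length_replicate, length_singleton] at h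
    simp [simpleM, take_append, take_replicate, countB, count_replicate,
      Nat.sub_eq_zero_of_le (by omega : m ≤ p)]
  · simp [simpleM, take_replicate, countB, count_replicate]

lemma length_simpleM_le (hqp : q ≤ p + 1) (c : Bool) : (simpleM p q c).length ≤ p + 1 := by
  cases c <;> simp [simpleM, hqp]

def imageLength (p q : ℕ) (u : ℕ → Bool) (k : ℕ) : ℕ :=
  (p + 1) * prefCountA u k + q * prefCountB u k

lemma length_applyM_prefWord (u : ℕ → Bool) (k : ℕ) :
    (applyM (simpleM p q) (prefWord u k)).length = imageLength p q u k :=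
  length_applyM_simpleM _

lemma imageLength_succ (u : ℕ → Bool) (k : ℕ) :
    imageLength p q u (k + 1) = imageLength p q u k + (simpleM p q (u k)).length := by
  rw [← length_applyM_prefWord, ← length_applyM_prefWord, prefWord_succ, applyM_append,
    applyM_singleton, length_append]

lemma imageLength_strictMono (hq : 1 ≤ q) (u : ℕ → Bool) : StrictMono (imageLength p q u) :=
  strictMono_nat_of_lt_succ fun k => by
    rw [imageLength_succ]
    cases u k <;> simp only [simpleM, length_append, length_replicate, length_singleton] <;> omega

lemma imageLength_add_two_mul_le (hp : 1 ≤ p) (hq : 2 ≤ q) (u : ℕ → Bool) {j k : ℕ}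
    (h : j ≤ k) : imageLength p q u j + 2 * (k - j) ≤ imageLength p q u k := by
  induction k, h using Nat.le_induction with
  | base => simp
  | succ k hjk ih =>
    rw [imageLength_succ]
    have : 2 ≤ (simpleM p q (u k)).length := by
      cases u k <;> simp only [simpleM, length_append, length_replicate, length_singleton] <;> omega
    omega

lemma Nat.exists_le_lt_succ_of_strictMono {f : ℕ → ℕ} (hf : StrictMono f) (h0 : f 0 = 0)
    (m : ℕ) : ∃ k, f k ≤ m ∧ m < f (k + 1) := by
  induction m with
  | zero => exact ⟨0, h0.le, by have := hf (Nat.lt_add_one 0); omega⟩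
  | succ m ih =>
    obtain ⟨k, hkm, hmk⟩ := ih
    by_cases h : m + 1 < f (k + 1)
    · exact ⟨k, by omega, h⟩
    · exact ⟨k + 1, by omega, by have := hf (Nat.lt_add_one (k + 1)); omega⟩

lemma IsImage.prefCountB_eq {u u' : ℕ → Bool} (h : IsImage (simpleM p q) u u') {k m : ℕ}
    (hkm : imageLength p q u k ≤ m) (hmk : m < imageLength p q u (k + 1)) :
    prefCountB u' m = prefCountA u k := by
  have hpre := h (k + 1)
  rw [prefWord_succ, applyM_append, applyM_singleton] at hpre
  rw [imageLength_succ, ← length_applyM_prefWord] at hmk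
  rw [← length_applyM_prefWord] at hkm
  rw [prefCountB, hpre.prefWord_eq_take (by simp only [length_append]; omega), take_append,
    take_of_length_le hkm, countB_append, countB_applyM_simpleM,
    countB_take_simpleM (by omega), add_zero, prefCountA]

lemma IsImage.exists_prefCountB_eq (hq : 1 ≤ q) {u u' : ℕ → Bool}
    (h : IsImage (simpleM p q) u u') (m : ℕ) :
    ∃ k, imageLength p q u k ≤ m ∧ m < imageLength p q u (k + 1) ∧
      prefCountB u' m = prefCountA u k := by
  obtain ⟨k, hkm, hmk⟩ := Nat.exists_le_lt_succ_of_strictMono (imageLength_strictMono hq u)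
    (by simp [imageLength, prefCountA, prefCountB, prefWord, countA, countB]) m
  exact ⟨k, hkm, hmk, h.prefCountB_eq hkm hmk⟩

end Morphism

section Comparison

variable {p q : ℕ} {u w v : ℕ → Bool}

lemma le_prefCountB_of_isImage_prependA (hq : 1 ≤ q)
    (hvw : IsImage (simpleM p q) v (prependA p w)) {a b n : ℕ}
    (hb : prefCountB v (a + b) ≤ b) (hn : (p + 1) * a + q * b ≤ n + p) :
    a ≤ prefCountB w n := by
  obtain ⟨J, -, hJ, hJw⟩ := hvw.exists_prefCountB_eq hq (p + n)
  rw [← prefCountB_prependA p w n, hJw]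
  by_contra! hJa
  have hsum := prefCountA_add_prefCountB v
  rcases le_or_gt (a + b) J with hL | hL
  · have := prefCountA_mono v hL
    have := hsum (a + b)
    omega
  · have hA : prefCountA v (J + 1) ≤ a := by
      have := prefCountB_mono v (Nat.le_add_right J 1)
      have := hsum J
      have := hsum (J + 1)
      omega
    have hB : prefCountB v (J + 1) ≤ b := (prefCountB_mono v hL).trans hb
    have : imageLength p q v (J + 1) ≤ (p + 1) * a + q * b := by
      unfold imageLength
      gcongr
    omega

lemma prefCountB_le_of_isImage (hq : 1 ≤ q) (hwv : IsImage (simpleM p q) w v) {a b n : ℕ}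
    (hb : b ≤ prefCountB w (a + b)) (hn : n < (p + 1) * (a + 1) + q * b) :
    prefCountB v n ≤ a := by
  obtain ⟨K, hK, -, hKv⟩ := hwv.exists_prefCountB_eq hq n
  rw [hKv]
  by_contra! hKa
  have hsum := prefCountA_add_prefCountB w
  rcases le_or_gt K (a + b) with hL | hL
  · have := prefCountA_mono w hL
    have := hsum (a + b)
    omega
  · have hB : b ≤ prefCountB w K := hb.trans (prefCountB_mono w hL.le)
    have : (p + 1) * (a + 1) + q * b ≤ imageLength p q w K := by
      unfold imageLength
      gcongr
      exact hKa
    omega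

/-- The factor `u'[i, i+n)` is `φ(u[k, k+a+b))` trimmed by less than a block at each end. -/
lemma IsImage.exists_factor_preimage (hp : 1 ≤ p) (hq : 2 ≤ q) (hqp : q ≤ p + 1)
    {u' : ℕ → Bool} (h : IsImage (simpleM p q) u u') (i n : ℕ) (hn : 2 ≤ n) :
    ∃ k a b, a + b < n ∧ prefCountB u (k + (a + b)) = prefCountB u k + b ∧
      prefCountB u' (i + n) = prefCountB u' i + a ∧
      (p + 1) * a + q * b ≤ n + p ∧ n < (p + 1) * (a + 1) + q * b := by
  obtain ⟨k, hk, hk1, hki⟩ := h.exists_prefCountB_eq (by omega) i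
  obtain ⟨k', hk', hk'1, hk'i⟩ := h.exists_prefCountB_eq (by omega) (i + n)
  have hkk' : k ≤ k' := Nat.lt_add_one_iff.1 <|
    (imageLength_strictMono (p := p) (q := q) (by omega) u).lt_iff_lt.1 (by omega)
  obtain ⟨a, ha⟩ := Nat.exists_eq_add_of_le (prefCountA_mono u hkk')
  obtain ⟨b, hb⟩ := Nat.exists_eq_add_of_le (prefCountB_mono u hkk')
  have hk'ab : k' = k + (a + b) := by
    have := prefCountA_add_prefCountB u k
    have := prefCountA_add_prefCountB u k'
    omega
  have hgl : imageLength p q u k' = imageLength p q u k + ((p + 1) * a + q * b) := by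
    unfold imageLength
    rw [ha, hb]
    ring
  have hblock (j : ℕ) : imageLength p q u (j + 1) ≤ imageLength p q u j + (p + 1) := by
    rw [imageLength_succ]
    exact Nat.add_le_add_left (length_simpleM_le hqp _) _
  have hlt : a + b < n := by
    rcases Nat.eq_or_lt_of_le hkk' with rfl | hkk'
    · omega
    · have := imageLength_add_two_mul_le hp hq u (show k + 1 ≤ k' by omega)
      omega
  refine ⟨k, a, b, hlt, hk'ab ▸ hb, by rw [hki, hk'i, ha], ?_, ?_⟩
  · have := hblock k
    omega
  · have := hblock k'
    have : (p + 1) * (a + 1) = (p + 1) * a + (p + 1) := by ring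
    omega

theorem prefCountB_factor_bounds (hp : 1 ≤ p) (hq : 2 ≤ q) (hqp : q ≤ p + 1)
    (hu : IsImage (simpleM p q) u u) (hwv : IsImage (simpleM p q) w v)
    (hvw : IsImage (simpleM p q) v (prependA p w)) (hw0 : w 0 = true) (hv0 : v 0 = false)
    (n i : ℕ) :
    prefCountB v n + prefCountB u i ≤ prefCountB u (i + n) ∧
      prefCountB u (i + n) ≤ prefCountB u i + prefCountB w n := by
  induction n using Nat.strong_induction_on generalizing i with
  | _ n ih =>
  rcases lt_or_ge n 2 with hn | hn
  · have hv : prefCountB v n = 0 := by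
      interval_cases n <;> simp [prefCountB, prefWord, countB, hv0]
    have hw : n ≤ prefCountB w n := by
      interval_cases n <;> simp [prefCountB, prefWord, countB, hw0]
    have := prefCountB_mono u (Nat.le_add_right i n)
    have := prefCountB_add_le u i n
    omega
  · obtain ⟨k, a, b, hlt, hk, hi, hup, hlow⟩ := hu.exists_factor_preimage hp hq hqp i n hn
    obtain ⟨ihv, ihw⟩ := ih (a + b) hlt k
    have := prefCountB_le_of_isImage (by omega) hwv (by omega) hlow
    have := le_prefCountB_of_isImage_prependA (by omega) hvw (by omega) hup
    omega

end Comparison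

section SimpleParry

variable {p q : ℕ}

lemma wSim_succ (φ : Bool → List Bool) (q N : ℕ) :
    wSim φ q (N + 1) = wSim φ q N ++ (applyM φ)^[2 * N + 1] (replicate (q - 1) false) := by
  simp [wSim, range_succ]

lemma applyM_applyM_wSim (hq : 1 ≤ q) (N : ℕ) :
    applyM (simpleM p q) (applyM (simpleM p q) (wSim (simpleM p q) q N)) =
      replicate p false ++ wSim (simpleM p q) q (N + 1) := by
  induction N with
  | zero =>
    obtain ⟨r, rfl⟩ := Nat.exists_eq_add_of_le' hq
    simp [wSim, simpleM, replicate_succ]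
  | succ N ih =>
    have hiter : (applyM (simpleM p q))^[2 * (N + 1) + 1] (replicate (q - 1) false) =
        applyM (simpleM p q) (applyM (simpleM p q)
          ((applyM (simpleM p q))^[2 * N + 1] (replicate (q - 1) false))) := by
      simp only [show 2 * (N + 1) + 1 = 2 * N + 1 + 1 + 1 by ring, Function.iterate_succ_apply']
    rw [wSim_succ, applyM_append, applyM_append, ih, wSim_succ _ _ (N + 1), hiter, append_assoc]

lemma le_length_wSim (hq : 2 ≤ q) (N : ℕ) : N ≤ (wSim (simpleM p q) q N).length := by
  induction N with
  | zero => simp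
  | succ N ih =>
    have := length_le_length_iterate_applyM (p := p) (q := q) (by omega) (2 * N + 1)
      (replicate (q - 1) false)
    rw [wSim_succ, length_append]
    rw [length_replicate] at this
    omega

lemma lt_length_iterW (hp : 1 ≤ p) (hq : 2 ≤ q) (n : ℕ) :
    n < (iterW (simpleM p q) n false).length := by
  induction n with
  | zero => simp [iterW]
  | succ n ih =>
    have := two_mul_length_le_length_applyM hp hq (iterW (simpleM p q) n false)
    rw [iterW_succ]
    omega

lemma isImage_of_iterW (hp : 1 ≤ p) (hq : 2 ≤ q) {ub : ℕ → Bool}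
    (hub : ∀ m, IsPrefixOf (iterW (simpleM p q) m false) ub) : IsImage (simpleM p q) ub ub :=
  isImage_of_prefixes _ hub (fun m => iterW_succ (simpleM p q) m false ▸ hub (m + 1))
    fun m => (lt_length_iterW hp hq m).le

section Limits

variable (hq : 2 ≤ q) {winf vinf : ℕ → Bool}
  (hwinf : ∀ N, IsPrefixOf (wSim (simpleM p q) q N) winf)
  (hvinf : ∀ N, IsPrefixOf (applyM (simpleM p q) (wSim (simpleM p q) q N)) vinf)
include hq hwinf hvinf

lemma isImage_of_wSim : IsImage (simpleM p q) winf vinf :=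
  isImage_of_prefixes _ hwinf hvinf (le_length_wSim hq)

lemma isImage_prependA_of_wSim : IsImage (simpleM p q) vinf (prependA p winf) :=
  isImage_of_prefixes _ hvinf
    (fun N => applyM_applyM_wSim (p := p) (q := q) (by omega) N ▸
      (hwinf (N + 1)).replicate_append p)
    fun N => (le_length_wSim hq N).trans (length_le_length_applyM (by omega) _)

end Limits

lemma head_eq_true_of_wSim {winf : ℕ → Bool}
    (hwinf : ∀ N, IsPrefixOf (wSim (simpleM p q) q N) winf) : winf 0 = true :=
  ((isPrefixOf_iff_getElem.1 (hwinf 0)) 0 (by simp [wSim])).symm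

lemma head_eq_false_of_wSim (hq : 1 ≤ q) {vinf : ℕ → Bool}
    (hvinf : ∀ N, IsPrefixOf (applyM (simpleM p q) (wSim (simpleM p q) q N)) vinf) :
    vinf 0 = false := by
  have := (isPrefixOf_iff_getElem.1 (hvinf 0)) 0
    (by simpa [wSim, simpleM] using Nat.lt_of_succ_le hq)
  simpa [wSim, simpleM] using this.symm

end SimpleParry

/-- in the simple case with `q > 1`, the prefixes of `w = lim w⁽ᴺ⁾`
maximize and the prefixes of `v = lim φ(w⁽ᴺ⁾)` minimize the number of `B`'s among
factors of `u_β` of a given length. -/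
theorem stmt14 (p q : ℕ) (hq : 1 < q) (hpq : q ≤ p)
    (φ : Bool → List Bool) (hφ : φ = simpleM p q)
    (ub : ℕ → Bool) (hub : ∀ m, IsPrefixOf (iterW φ m false) ub)
    (winf vinf : ℕ → Bool)
    (hwinf : ∀ N, IsPrefixOf (wSim φ q N) winf)
    (hvinf : ∀ N, IsPrefixOf (applyM φ (wSim φ q N)) vinf)
    (u : List Bool) (hu : IsFactor ub u) :
    countB (prefWord vinf u.length) ≤ countB u ∧
      countB u ≤ countB (prefWord winf u.length) := by
  subst hφ
  obtain ⟨i, hi⟩ := hu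
  have hsplit : prefCountB ub (i + u.length) = prefCountB ub i + countB u := by
    rw [prefCountB, prefWord_add, ← hi, countB_append, prefCountB]
  have hbounds := prefCountB_factor_bounds (by omega) hq (by omega)
    (isImage_of_iterW (by omega) hq hub) (isImage_of_wSim hq hwinf hvinf)
    (isImage_prependA_of_wSim hq hwinf hvinf) (head_eq_true_of_wSim hwinf)
    (head_eq_false_of_wSim (by omega) hvinf) u.length i
  unfold prefCountB at hbounds hsplit
  omega
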